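/- arXiv:1904.08205 — 6 statements merged into one kernel-verified Lean document; each statement's English description precedes it below -/
import Mathlib

section
/- For 0 ≤ p < q ≤ 1, the binary relative entropy satisfies kl(p,q) ≥ (p−q)² / (2·max_{x∈[p,q]} x(1−x)). -/
/-!
For fixed `p`, `kl(p,x)` is `c(x) - c(p)` for the cross entropy
`c(x) = -p log x - (1-p) log (1-x)`, whose derivative `(x-p)/(x(1-x))` is at least `(x-p)/M`
on `[p,q]`, with `M` the maximum of `x(1-x)` there. Integrating from `p` to `q` gives
`kl(p,q) ≥ (q-p)²/(2M)`. At `q = 1` the divergence is `+∞`.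
-/

open Real

/-- Binary relative entropy `kl(p,q)` between Bernoulli(p) and Bernoulli(q), valued in
`EReal` so that the conventions `0·log 0 = 0` and `x·log(x/0) = +∞` (for `x > 0`) hold. -/
noncomputable def klBin (p q : ℝ) : EReal :=
  if (q = 0 ∧ 0 < p) ∨ (q = 1 ∧ p < 1) then ⊤
  else ((p * Real.log (p / q) + (1 - p) * Real.log ((1 - p) / (1 - q)) : ℝ) : EReal)

open Set

theorem sq_div_le_sub_of_le_hasDerivAt {f f' : ℝ → ℝ} {a b M : ℝ} (hab : a ≤ b)
    (hf : ContinuousOn f (Icc a b)) (hf' : ∀ x ∈ Ioo a b, HasDerivAt f (f' x) x)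
    (hle : ∀ x ∈ Ioo a b, (x - a) / M ≤ f' x) :
    (b - a) ^ 2 / (2 * M) ≤ f b - f a := by
  set g : ℝ → ℝ := fun x => f x - (x - a) ^ 2 / (2 * M) with hg_def
  have hg : MonotoneOn g (Icc a b) := by
    refine monotoneOn_of_hasDerivWithinAt_nonneg (f' := fun x => f' x - (x - a) / M)
      (convex_Icc a b) (by fun_prop) ?_ ?_ <;> rw [interior_Icc] <;> intro x hx
    · have hsq : HasDerivAt (fun x => (x - a) ^ 2 / (2 * M)) ((x - a) / M) x := by
        refine ((((hasDerivAt_id' x).sub_const a).pow 2).div_const (2 * M)).congr_deriv ?_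
        ring
      exact ((hf' x hx).sub hsq).hasDerivWithinAt
    · exact sub_nonneg.2 (hle x hx)
  have := hg ⟨le_rfl, hab⟩ ⟨hab, le_rfl⟩ hab
  simp only [hg_def, sub_self, zero_pow two_ne_zero, zero_div, sub_zero] at this
  linarith

theorem mul_log_div (a : ℝ) {x : ℝ} (hx : x ≠ 0) : a * log (a / x) = a * log a - a * log x := by
  rcases eq_or_ne a 0 with rfl | ha
  · simp
  · rw [log_div ha hx, mul_sub]

noncomputable def bernoulliCrossEntropy (p x : ℝ) : ℝ := -(p * log x) - (1 - p) * log (1 - x)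

theorem klBin_eq_bernoulliCrossEntropy_sub {p q : ℝ} (hq₀ : q ≠ 0) (hq₁ : q ≠ 1) :
    klBin p q = ((bernoulliCrossEntropy p q - bernoulliCrossEntropy p p : ℝ) : EReal) := by
  rw [klBin, if_neg (by tauto), mul_log_div p hq₀, mul_log_div (1 - p) (sub_ne_zero.2 hq₁.symm),
    bernoulliCrossEntropy, bernoulliCrossEntropy]
  congr 1
  ring

theorem klBin_one {p : ℝ} (hp : p < 1) : klBin p 1 = ⊤ :=
  if_pos (Or.inr ⟨rfl, hp⟩)

theorem hasDerivAt_bernoulliCrossEntropy (p : ℝ) {x : ℝ} (hx₀ : 0 < x) (hx₁ : x < 1) :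
    HasDerivAt (bernoulliCrossEntropy p) ((x - p) / (x * (1 - x))) x := by
  have hlog₁ : HasDerivAt (fun y => log (1 - y)) (-1 / (1 - x)) x := by
    simpa using ((hasDerivAt_id x).const_sub 1).log (sub_pos.2 hx₁).ne'
  refine (((hasDerivAt_log hx₀.ne').const_mul p).neg.sub (hlog₁.const_mul (1 - p))).congr_deriv ?_
  field_simp [hx₀.ne', (sub_pos.2 hx₁).ne']
  ring

theorem continuousOn_bernoulliCrossEntropy {p q : ℝ} (hp : 0 ≤ p) (hq : q < 1) :
    ContinuousOn (bernoulliCrossEntropy p) (Icc p q) := by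
  have hlog : ContinuousOn (fun x => p * log x) (Icc p q) := by
    rcases hp.eq_or_lt with rfl | hp
    · simpa using continuousOn_const
    · exact continuousOn_const.mul
        (continuousOn_log.mono fun x hx => (hp.trans_le hx.1).ne')
  have hlog₁ : ContinuousOn (fun x => log (1 - x)) (Icc p q) :=
    continuousOn_log.comp (by fun_prop) fun x hx => (sub_pos.2 (hx.2.trans_lt hq)).ne'
  exact hlog.neg.sub (continuousOn_const.mul hlog₁)

theorem sq_div_le_bernoulliCrossEntropy_sub {p q : ℝ} (hp : 0 ≤ p) (hpq : p ≤ q) (hq : q < 1) :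
    (q - p) ^ 2 / (2 * sSup ((fun x => x * (1 - x)) '' Icc p q)) ≤
      bernoulliCrossEntropy p q - bernoulliCrossEntropy p p := by
  refine sq_div_le_sub_of_le_hasDerivAt hpq (continuousOn_bernoulliCrossEntropy hp hq)
    (fun x hx => hasDerivAt_bernoulliCrossEntropy p (hp.trans_lt hx.1) (hx.2.trans hq))
    fun x hx => div_le_div_of_nonneg_left (sub_nonneg.2 hx.1.le) ?_ ?_
  · exact mul_pos (hp.trans_lt hx.1) (sub_pos.2 (hx.2.trans hq))
  · exact (continuous_id.mul (continuous_const.sub continuous_id)).continuousOn.le_sSup_image_Icc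
      (Ioo_subset_Icc_self hx)

/-- refined Pinsker: for `0 ≤ p < q ≤ 1`,
`kl(p,q) ≥ (p−q)² / (2·max_{x∈[p,q]} x(1−x))`. -/
theorem stmt4 (p q : ℝ) (hp : 0 ≤ p) (hpq : p < q) (hq : q ≤ 1) :
    klBin p q ≥
      (((p - q) ^ 2 / (2 * sSup ((fun x => x * (1 - x)) '' Set.Icc p q)) : ℝ) : EReal) := by
  rcases hq.eq_or_lt with rfl | hq
  · rw [klBin_one hpq]
    exact le_top
  rw [klBin_eq_bernoulliCrossEntropy_sub (hp.trans_lt hpq).ne' hq.ne, ge_iff_le,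
    EReal.coe_le_coe_iff, ← neg_sub q p, neg_sq]
  exact sq_div_le_bernoulliCrossEntropy_sub hp hpq.le hq
end

section
/- Let u : ℝ → ℝ be concave and k-Lipschitz, and define the Optimized Certainty Equivalent S_u(Y) = sup_{z∈ℝ} { z + E[u(Y − z)] } for integrable random variables Y. Then for any two integrable random variables Y₁, Y₂, |S_u(Y₁) − S_u(Y₂)| ≤ k·W₁(Y₁, Y₂), where W₁ denotes the 1-Wasserstein distance between the laws of Y₁ and Y₂. -/
open MeasureTheory

/-- 1-Wasserstein distance via the Kantorovich–Rubinstein dual representation: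
`W₁(μ,ν) = sup { |∫f dμ − ∫f dν| : f 1-Lipschitz }`. -/
noncomputable def W1 (μ ν : Measure ℝ) : ℝ :=
  sSup {r : ℝ | ∃ f : ℝ → ℝ, LipschitzWith 1 f ∧ r = |∫ x, f x ∂μ - ∫ x, f x ∂ν|}

/-- Optimized Certainty Equivalent `S_u(Y) = sup_z { z + E[u(Y − z)] }`. -/
noncomputable def OCE {Ω : Type*} [MeasurableSpace Ω] (μ : Measure Ω)
    (u : ℝ → ℝ) (Y : Ω → ℝ) : ℝ :=
  sSup {r : ℝ | ∃ z : ℝ, r = z + ∫ ω, u (Y ω - z) ∂μ}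


lemma lip_comp_integrable {Ω : Type*} [MeasurableSpace Ω] {μ : Measure Ω} [IsFiniteMeasure μ]
    {c : NNReal} {u : ℝ → ℝ} (hu : LipschitzWith c u) {Y : Ω → ℝ}
    (hY : AEStronglyMeasurable Y μ) (hint : Integrable Y μ) :
    Integrable (fun ω => u (Y ω)) μ := by
  have hm : AEStronglyMeasurable (fun ω => u (Y ω)) μ :=
    hu.continuous.comp_aestronglyMeasurable hY
  have h1 : Integrable (fun ω => u (Y ω) - u 0) μ := by
    refine ((hint.abs.const_mul (c:ℝ)).mono (hm.sub aestronglyMeasurable_const) ?_)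
    filter_upwards with ω
    have h := hu.dist_le_mul (Y ω) 0
    simp only [Real.dist_eq, sub_zero] at h
    simpa [Real.norm_eq_abs, abs_mul, abs_abs, NNReal.abs_eq] using h
  exact (h1.add (integrable_const (u 0))).congr (Filter.Eventually.of_forall fun ω => by simp)

lemma sup_diff_le {g₁ g₂ : ℝ → ℝ} {K : ℝ} (hK : 0 ≤ K) (h : ∀ z, |g₁ z - g₂ z| ≤ K) :
    |sSup {r | ∃ z, r = g₁ z} - sSup {r | ∃ z, r = g₂ z}| ≤ K := by
  set A₁ := {r | ∃ z, r = g₁ z}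
  set A₂ := {r | ∃ z, r = g₂ z}
  have ne₁ : A₁.Nonempty := ⟨g₁ 0, 0, rfl⟩
  have ne₂ : A₂.Nonempty := ⟨g₂ 0, 0, rfl⟩
  have h12 : ∀ z, g₁ z ≤ g₂ z + K := fun z => by
    have := (abs_le.mp (h z)).2; linarith
  have h21 : ∀ z, g₂ z ≤ g₁ z + K := fun z => by
    have := (abs_le.mp (h z)).1; linarith
  by_cases hb : BddAbove A₂
  · have hb1 : BddAbove A₁ := by
      obtain ⟨M, hM⟩ := hb
      refine ⟨M + K, ?_⟩
      rintro r ⟨z, rfl⟩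
      exact (h12 z).trans (add_le_add_left (hM ⟨z, rfl⟩) K)
    rw [abs_le]
    constructor
    · have : sSup A₂ ≤ sSup A₁ + K := by
        refine csSup_le ne₂ ?_
        rintro r ⟨z, rfl⟩
        exact (h21 z).trans (add_le_add_left (le_csSup hb1 ⟨z, rfl⟩) K)
      linarith
    · have : sSup A₁ ≤ sSup A₂ + K := by
        refine csSup_le ne₁ ?_
        rintro r ⟨z, rfl⟩
        exact (h12 z).trans (add_le_add_left (le_csSup hb ⟨z, rfl⟩) K)
      linarith
  · have hb1 : ¬ BddAbove A₁ := by
      intro ⟨M, hM⟩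
      refine hb ⟨M + K, ?_⟩
      rintro r ⟨z, rfl⟩
      exact (h21 z).trans (add_le_add_left (hM ⟨z, rfl⟩) K)
    rw [Real.sSup_of_not_bddAbove hb, Real.sSup_of_not_bddAbove hb1]
    simpa using hK


/-- if `u` is concave and `k`-Lipschitz, then the OCE is `k`-Lipschitz with
respect to the 1-Wasserstein distance between the laws:
`|S_u(Y₁) − S_u(Y₂)| ≤ k·W₁(Y₁, Y₂)`. -/
theorem stmt6 {Ω : Type*} [MeasurableSpace Ω] (μ : Measure Ω) [IsProbabilityMeasure μ]
    (u : ℝ → ℝ) (k : NNReal) (hconc : ConcaveOn ℝ Set.univ u) (hlip : LipschitzWith k u)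
    (Y₁ Y₂ : Ω → ℝ) (hY₁ : Measurable Y₁) (hY₂ : Measurable Y₂)
    (hint₁ : Integrable Y₁ μ) (hint₂ : Integrable Y₂ μ) :
    |OCE μ u Y₁ - OCE μ u Y₂| ≤ (k : ℝ) * W1 (μ.map Y₁) (μ.map Y₂) := by
  set ν₁ := μ.map Y₁ with hν₁def
  set ν₂ := μ.map Y₂ with hν₂def
  haveI hpm₁ : IsProbabilityMeasure ν₁ := Measure.isProbabilityMeasure_map hY₁.aemeasurable
  haveI hpm₂ : IsProbabilityMeasure ν₂ := Measure.isProbabilityMeasure_map hY₂.aemeasurable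
  have hid₁ : Integrable (fun x => x) ν₁ :=
    (integrable_map_measure aestronglyMeasurable_id hY₁.aemeasurable).mpr hint₁
  have hid₂ : Integrable (fun x => x) ν₂ :=
    (integrable_map_measure aestronglyMeasurable_id hY₂.aemeasurable).mpr hint₂
  set S := {r : ℝ | ∃ f : ℝ → ℝ, LipschitzWith 1 f ∧ r = |∫ x, f x ∂ν₁ - ∫ x, f x ∂ν₂|} with hSdef
  have hS0 : (0:ℝ) ∈ S := ⟨fun _ => 0, (LipschitzWith.const 0).weaken zero_le_one, by simp⟩
  -- key integral bound for 1-Lipschitz functions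
  have hcentered : ∀ (f : ℝ → ℝ), LipschitzWith 1 f → ∀ (ν : Measure ℝ),
      IsProbabilityMeasure ν → Integrable (fun x => x) ν →
      |∫ x, f x ∂ν - f 0| ≤ ∫ x, |x| ∂ν := by
    intro f hf ν hν hid
    have hfint : Integrable f ν := lip_comp_integrable hf aestronglyMeasurable_id hid
    have h1 : ∫ x, f x ∂ν - f 0 = ∫ x, (f x - f 0) ∂ν := by
      rw [integral_sub hfint (integrable_const _), integral_const]
      simp
    rw [h1]
    calc |∫ x, (f x - f 0) ∂ν| ≤ ∫ x, |f x - f 0| ∂ν := by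
          simpa [Real.norm_eq_abs] using
            norm_integral_le_integral_norm (μ := ν) (f := fun x => f x - f 0)
      _ ≤ ∫ x, |x| ∂ν := by
          refine integral_mono (hfint.sub (integrable_const _)).abs hid.abs ?_
          intro x
          have h := hf.dist_le_mul x 0
          simpa [Real.dist_eq] using h
  have hSbdd : BddAbove S := by
    refine ⟨∫ x, |x| ∂ν₁ + ∫ x, |x| ∂ν₂, ?_⟩
    rintro r ⟨f, hf, rfl⟩
    have b1 := hcentered f hf ν₁ hpm₁ hid₁
    have b2 := hcentered f hf ν₂ hpm₂ hid₂
    have htri : |∫ x, f x ∂ν₁ - ∫ x, f x ∂ν₂| ≤ |∫ x, f x ∂ν₁ - f 0| + |f 0 - ∫ x, f x ∂ν₂| :=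
      abs_sub_le _ _ _
    rw [abs_sub_comm (f 0)] at htri
    linarith
  have hW0 : (0:ℝ) ≤ W1 ν₁ ν₂ := le_csSup hSbdd hS0
  -- key per-z bound
  have key : ∀ z : ℝ, |(z + ∫ ω, u (Y₁ ω - z) ∂μ) - (z + ∫ ω, u (Y₂ ω - z) ∂μ)|
      ≤ (k:ℝ) * W1 ν₁ ν₂ := by
    intro z
    have hsub : LipschitzWith 1 (fun x : ℝ => x - z) :=
      LipschitzWith.of_dist_le_mul fun a b => by
        simp [Real.dist_eq, sub_sub_sub_cancel_right]
    have hzlip : LipschitzWith k (fun x : ℝ => u (x - z)) := by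
      simpa [Function.comp_def] using hlip.comp hsub
    have hmap₁ : ∫ ω, u (Y₁ ω - z) ∂μ = ∫ x, u (x - z) ∂ν₁ :=
      (integral_map hY₁.aemeasurable hzlip.continuous.aestronglyMeasurable).symm
    have hmap₂ : ∫ ω, u (Y₂ ω - z) ∂μ = ∫ x, u (x - z) ∂ν₂ :=
      (integral_map hY₂.aemeasurable hzlip.continuous.aestronglyMeasurable).symm
    rw [add_sub_add_left_eq_sub, hmap₁, hmap₂]
    rcases eq_or_ne k 0 with hk | hk
    · subst hk
      have hconst : ∀ x y : ℝ, u x = u y := by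
        intro x y
        have h0 : dist (u x) (u y) ≤ 0 := by simpa using hlip.dist_le_mul x y
        exact dist_le_zero.mp (h0)
      have : (fun x : ℝ => u (x - z)) = fun _ => u 0 := funext fun x => hconst _ _
      rw [this]
      simp [hW0]
    · have hkpos : (0:ℝ) < k := lt_of_le_of_ne k.coe_nonneg (by exact_mod_cast (Ne.symm hk))
      set f : ℝ → ℝ := fun x => (k:ℝ)⁻¹ * u (x - z) with hfdef
      have hf1 : LipschitzWith 1 f := by
        refine LipschitzWith.of_dist_le_mul fun x y => ?_
        have h := hzlip.dist_le_mul x y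
        rw [Real.dist_eq, Real.dist_eq] at h
        show dist (f x) (f y) ≤ 1 * dist x y
        rw [Real.dist_eq, Real.dist_eq, hfdef]
        simp only
        rw [← mul_sub, abs_mul, abs_of_nonneg (inv_nonneg.mpr k.coe_nonneg)]
        calc (k:ℝ)⁻¹ * |u (x - z) - u (y - z)| ≤ (k:ℝ)⁻¹ * ((k:ℝ) * |x - y|) := by
              gcongr
          _ = 1 * |x - y| := by field_simp
      have hfmem : |∫ x, f x ∂ν₁ - ∫ x, f x ∂ν₂| ∈ S := ⟨f, hf1, rfl⟩
      have hfle : |∫ x, f x ∂ν₁ - ∫ x, f x ∂ν₂| ≤ W1 ν₁ ν₂ := le_csSup hSbdd hfmem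
      have hscale : ∀ ν : Measure ℝ, ∫ x, f x ∂ν = (k:ℝ)⁻¹ * ∫ x, u (x - z) ∂ν := by
        intro ν
        rw [hfdef]
        exact integral_const_mul _ _
      rw [hscale ν₁, hscale ν₂, ← mul_sub, abs_mul,
        abs_of_nonneg (inv_nonneg.mpr k.coe_nonneg)] at hfle
      calc |∫ x, u (x - z) ∂ν₁ - ∫ x, u (x - z) ∂ν₂|
          = (k:ℝ) * ((k:ℝ)⁻¹ * |∫ x, u (x - z) ∂ν₁ - ∫ x, u (x - z) ∂ν₂|) := by
            field_simp
        _ ≤ (k:ℝ) * W1 ν₁ ν₂ := by gcongr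
  exact sup_diff_le (mul_nonneg k.coe_nonneg hW0) key
end

section
/- Let Y be a continuous random variable with CDF F and τ ∈ [0,1). Then the Conditional Value-at-Risk satisfies CVaRτ(Y) = inf_{z∈ℝ} { z + (1/(1−τ))·E[(Y−z)⁺] } = E[Y | Y ≥ q(τ)], where q(τ) = F⁻¹(τ) is the τ-quantile and (x)⁺ = max(x,0). -/
open MeasureTheory Filter Topology

/-!
At `z = q` the objective `z + (1 - τ)⁻¹ E[(Y - z)⁺]` equals `(1 - τ)⁻¹ E[Y; Y ≥ q]`, because
`P(Y ≥ q) = 1 - τ` (continuity of `F` rules out an atom at `q`). It is minimal there by the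
subgradient inequality `(y - z)⁺ ≥ (y - q)⁺ + (q - z) 1{y ≥ q}`: taking expectations gives
`E[(Y - z)⁺] ≥ E[(Y - q)⁺] + (q - z)(1 - τ)`.
-/

section Distribution

variable {Ω : Type*} [MeasurableSpace Ω] {μ : Measure Ω} {Y : Ω → ℝ} {F : ℝ → ℝ} {t : ℝ}

theorem measure_lt_eq_ofReal_of_continuousWithinAt
    (hcdf : ∀ s, μ {ω | Y ω ≤ s} = ENNReal.ofReal (F s))
    (hFt : ContinuousWithinAt F (Set.Iio t) t) :
    μ {ω | Y ω < t} = ENNReal.ofReal (F t) := by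
  refine le_antisymm ((measure_mono fun ω (h : Y ω < t) => h.le).trans (hcdf t).le) ?_
  have hlim : Tendsto (fun s => ENNReal.ofReal (F s)) (𝓝[<] t) (𝓝 (ENNReal.ofReal (F t))) :=
    ENNReal.continuous_ofReal.continuousAt.tendsto.comp hFt
  refine le_of_tendsto hlim (eventually_nhdsWithin_of_forall fun s (hs : s < t) => ?_)
  rw [← hcdf]
  exact measure_mono fun ω (h : Y ω ≤ s) => h.trans_lt hs

theorem measureReal_ge_eq_one_sub_of_continuousWithinAt [IsProbabilityMeasure μ]
    (hYm : Measurable Y) (hcdf : ∀ s, μ {ω | Y ω ≤ s} = ENNReal.ofReal (F s))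
    (hFt : ContinuousWithinAt F (Set.Iio t) t) (hF0 : 0 ≤ F t) :
    μ.real {ω | t ≤ Y ω} = 1 - F t := by
  have hcompl : {ω | t ≤ Y ω} = {ω | Y ω < t}ᶜ := by ext; simp
  rw [hcompl, measureReal_compl (measurableSet_lt hYm measurable_const), probReal_univ,
    measureReal_def, measure_lt_eq_ofReal_of_continuousWithinAt hcdf hFt, ENNReal.toReal_ofReal hF0]

end Distribution

theorem max_sub_zero_add_ite_le (y q z : ℝ) :
    max (y - q) 0 + (if q ≤ y then q - z else 0) ≤ max (y - z) 0 := by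
  split_ifs with h
  · rw [max_eq_left (sub_nonneg.mpr h)]
    linarith [le_max_left (y - z) 0]
  · rw [max_eq_right (by linarith), zero_add]
    exact le_max_right _ _

section PositivePart

variable {Ω : Type*} [MeasurableSpace Ω] {μ : Measure Ω} [IsFiniteMeasure μ] {Y : Ω → ℝ}

theorem integrable_max_sub_zero (hY : Integrable Y μ) (z : ℝ) :
    Integrable (fun ω => max (Y ω - z) 0) μ :=
  (hY.sub (integrable_const z)).pos_part

theorem integral_max_sub_zero_eq (hYm : Measurable Y) (hY : Integrable Y μ) (q : ℝ) :
    ∫ ω, max (Y ω - q) 0 ∂μ = ∫ ω in {ω | q ≤ Y ω}, Y ω ∂μ - q * μ.real {ω | q ≤ Y ω} := by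
  have hind : (fun ω => max (Y ω - q) 0) = {ω | q ≤ Y ω}.indicator (fun ω => Y ω - q) := by
    ext ω
    by_cases h : q ≤ Y ω
    · simp [h]
    · simp [h, (not_le.mp h).le]
  rw [hind, integral_indicator (measurableSet_le measurable_const hYm),
    integral_sub hY.integrableOn (integrableOn_const (measure_ne_top μ _)), setIntegral_const,
    smul_eq_mul, mul_comm]

theorem integral_max_sub_zero_add_le (hYm : Measurable Y) (hY : Integrable Y μ) (q z : ℝ) :
    ∫ ω, max (Y ω - q) 0 ∂μ + (q - z) * μ.real {ω | q ≤ Y ω} ≤ ∫ ω, max (Y ω - z) 0 ∂μ := by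
  have hs : MeasurableSet {ω | q ≤ Y ω} := measurableSet_le measurable_const hYm
  have hind : Integrable ({ω | q ≤ Y ω}.indicator fun _ => q - z) μ :=
    (integrable_const _).indicator hs
  have hmono : ∫ ω, max (Y ω - q) 0 + {ω | q ≤ Y ω}.indicator (fun _ => q - z) ω ∂μ ≤
      ∫ ω, max (Y ω - z) 0 ∂μ :=
    integral_mono ((integrable_max_sub_zero hY q).add hind) (integrable_max_sub_zero hY z)
      fun ω => by simpa [Set.indicator_apply] using max_sub_zero_add_ite_le (Y ω) q z
  rwa [integral_add (integrable_max_sub_zero hY q) hind, integral_indicator hs, setIntegral_const,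
    smul_eq_mul, mul_comm] at hmono

/-- `q` minimises the Rockafellar–Uryasev objective with weight `c = P(Y ≥ q)⁻¹`. -/
theorem add_mul_integral_max_sub_zero_le (hYm : Measurable Y) (hY : Integrable Y μ) {q c : ℝ}
    (hc : c * μ.real {ω | q ≤ Y ω} = 1) (z : ℝ) :
    q + c * ∫ ω, max (Y ω - q) 0 ∂μ ≤ z + c * ∫ ω, max (Y ω - z) 0 ∂μ := by
  have hc0 : 0 ≤ c := by
    by_contra! h
    nlinarith [measureReal_nonneg (μ := μ) (s := {ω | q ≤ Y ω})]
  have := mul_le_mul_of_nonneg_left (integral_max_sub_zero_add_le hYm hY q z) hc0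
  linear_combination this + (z - q) * hc

end PositivePart

theorem stmt8_general {Ω : Type*} [MeasurableSpace Ω] (μ : Measure Ω) [IsProbabilityMeasure μ]
    (Y : Ω → ℝ) (hYm : Measurable Y) (hYint : Integrable Y μ)
    (F : ℝ → ℝ) (hFc : Continuous F)
    (hcdf : ∀ t : ℝ, μ {ω | Y ω ≤ t} = ENNReal.ofReal (F t))
    (τ : ℝ) (hτ : τ ∈ Set.Ico (0:ℝ) 1)
    (qτ : ℝ) (hq : F qτ = τ) :
    sInf {r : ℝ | ∃ z : ℝ, r = z + (1 / (1 - τ)) * ∫ ω, max (Y ω - z) 0 ∂μ} =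
      (1 / (1 - τ)) * ∫ ω in {ω | Y ω ≥ qτ}, Y ω ∂μ := by
  obtain ⟨hτ0, hτ1⟩ := hτ
  have htail : μ.real {ω | qτ ≤ Y ω} = 1 - τ := by
    rw [← hq]
    exact measureReal_ge_eq_one_sub_of_continuousWithinAt hYm hcdf hFc.continuousWithinAt
      (hq ▸ hτ0)
  have hc : 1 / (1 - τ) * μ.real {ω | qτ ≤ Y ω} = 1 := by
    rw [htail]
    field_simp [sub_ne_zero.mpr hτ1.ne']
  have hleast : IsLeast {r : ℝ | ∃ z : ℝ, r = z + (1 / (1 - τ)) * ∫ ω, max (Y ω - z) 0 ∂μ}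
      (qτ + (1 / (1 - τ)) * ∫ ω, max (Y ω - qτ) 0 ∂μ) := by
    refine ⟨⟨qτ, rfl⟩, ?_⟩
    rintro r ⟨z, rfl⟩
    exact add_mul_integral_max_sub_zero_le hYm hYint hc z
  rw [hleast.csInf_eq, integral_max_sub_zero_eq hYm hYint]
  change _ = 1 / (1 - τ) * ∫ ω in {ω | qτ ≤ Y ω}, Y ω ∂μ
  linear_combination -qτ * hc

/-- Rockafellar–Uryasev representation: for an integrable random variable `Y`
with continuous strictly increasing CDF `F` and `τ ∈ [0,1)`, with `q(τ) = F⁻¹(τ)`,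
`inf_z { z + (1/(1−τ))·E[(Y−z)⁺] } = E[Y | Y ≥ q(τ)]`. -/
theorem stmt8 {Ω : Type*} [MeasurableSpace Ω] (μ : Measure Ω) [IsProbabilityMeasure μ]
    (Y : Ω → ℝ) (hYm : Measurable Y) (hYint : Integrable Y μ)
    (F : ℝ → ℝ) (hFc : Continuous F) (hFm : StrictMono F)
    (hcdf : ∀ t : ℝ, μ {ω | Y ω ≤ t} = ENNReal.ofReal (F t))
    (τ : ℝ) (hτ : τ ∈ Set.Ico (0:ℝ) 1)
    (qτ : ℝ) (hq : F qτ = τ) :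
    sInf {r : ℝ | ∃ z : ℝ, r = z + (1 / (1 - τ)) * ∫ ω, max (Y ω - z) 0 ∂μ} =
      (1 / (1 - τ)) * ∫ ω in {ω | Y ω ≥ qτ}, Y ω ∂μ :=
  stmt8_general μ Y hYm hYint F hFc hcdf τ hτ qτ hq
end

section
/- Suppose the objective g : X → ℝ with maximizer x* satisfies g(x) ≥ g(x*) − β̂·‖x − x*‖^γ̂ for all x, and suppose at the time a cell P_{h,j} with center x_{h,j} is selected its bounds satisfy: U over the optimal cell dominates g(x*) (i.e., U_{h*,j*} + β̂·δ(h*)^γ̂ ≥ g(x*)), L_{h,j} ≤ g(x_{h,j}), selection gives U_{h,j} + β̂·δ(h)^γ̂ ≥ U_{h*,j*} + β̂·δ(h*)^γ̂, and expansion requires U_{h,j} − L_{h,j} ≤ β̂·δ(h)^γ̂. Then g(x*) − g(x_{h,j}) ≤ 2·β̂·δ(h)^γ̂, i.e., x_{h,j} ∈ J_h := { x : g(x) + 2β̂·δ(h)^γ̂ ≥ g(x*) }. -/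
theorem stmt10_general {X : Type*}
    (g : X → ℝ) (xstar : X) (βh γh : ℝ)
    (δh δhstar : ℝ)
    (xhj : X) (U L Ustar : ℝ)
    -- the UCB over the optimal cell dominates g(x*)
    (hUstar : Ustar + βh * δhstar ^ γh ≥ g xstar)
    -- L is a valid lower confidence bound at the center of the selected cell
    (hL : L ≤ g xhj)
    -- the selected cell has the highest UCB, in particular it beats the optimal cell
    (hsel : U + βh * δh ^ γh ≥ Ustar + βh * δhstar ^ γh)
    -- the expansion condition
    (hexp : U - L ≤ βh * δh ^ γh) :
    g xstar - g xhj ≤ 2 * βh * δh ^ γh ∧ g xhj + 2 * βh * δh ^ γh ≥ g xstar := by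
  have hopt : g xstar ≤ g xhj + 2 * βh * δh ^ γh :=
    calc g xstar ≤ Ustar + βh * δhstar ^ γh := hUstar
      _ ≤ U + βh * δh ^ γh := hsel
      _ ≤ L + 2 * βh * δh ^ γh := by linarith
      _ ≤ g xhj + 2 * βh * δh ^ γh := by linarith
  exact ⟨by linarith, hopt⟩

/-- valid expansions, Proposition 1 of StoROO, as an arithmetic implication:
if `g(x) ≥ g(x*) − β̂·δ(h*)^γ̂`-type bounds hold at selection and expansion time, then the
center of the expanded cell is `2β̂δ(h)^γ̂`-optimal. -/
theorem stmt10 {X : Type*} [NormedAddCommGroup X]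
    (g : X → ℝ) (xstar : X) (βh γh : ℝ) (hβ : 0 < βh) (hγ : 0 < γh)
    (hreg : ∀ x : X, g x ≥ g xstar - βh * ‖x - xstar‖ ^ γh)
    (δh δhstar : ℝ) (hδh : 0 < δh) (hδhstar : 0 < δhstar)
    (xhj : X) (U L Ustar : ℝ)
    -- the UCB over the optimal cell dominates g(x*)
    (hUstar : Ustar + βh * δhstar ^ γh ≥ g xstar)
    -- L is a valid lower confidence bound at the center of the selected cell
    (hL : L ≤ g xhj)
    -- the selected cell has the highest UCB, in particular it beats the optimal cell
    (hsel : U + βh * δh ^ γh ≥ Ustar + βh * δhstar ^ γh)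
    -- the expansion condition
    (hexp : U - L ≤ βh * δh ^ γh) :
    g xstar - g xhj ≤ 2 * βh * δh ^ γh ∧ g xhj + 2 * βh * δh ^ γh ≥ g xstar :=
  stmt10_general g xstar βh γh δh δhstar xhj U L Ustar hUstar hL hsel hexp
end

section
/- Let d ≥ 0, C ≥ 0, ν > 0, β̂, γ̂ > 0, and suppose that for every ε > 0 the maximal number of disjoint balls of radius (ν^γ̂/2)·ε in the semi-metric ℓ(x,x') = β̂·‖x−x'‖^γ̂ with centers in X_ε = {x : g(x) ≥ g* − ε} is at most C·ε^{−d}. Suppose every cell P_{h,j} of depth h contains an ℓ-ball of radius β̂·(ν·δ(h))^γ̂ centered at its center x_{h,j}, and distinct cells at the same depth are disjoint. Then the number |J_h| of depth-h cells whose centers lie in J_h = {x : g(x) + 2β̂·δ(h)^γ̂ ≥ g*} satisfies |J_h| ≤ C·(2β̂·δ(h)^γ̂)^{−d}. -/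
open Finset

/-- Ball of radius `r` around `c` in the Hölderian semi-metric `ℓ(x,y) = β·‖x−y‖^γ`. -/
def lball {E : Type*} [NormedAddCommGroup E] (β γ : ℝ) (c : E) (r : ℝ) : Set E :=
  {x | β * ‖x - c‖ ^ γ < r}

/-- under the near-optimality-dimension packing hypothesis, the number of
depth-`h` cells whose centers are `2β̂δ(h)^γ̂`-optimal is at most `C·(2β̂δ(h)^γ̂)^{−d}`. -/
theorem stmt11 {E : Type*} [NormedAddCommGroup E]
    (g : E → ℝ) (gstar : ℝ) (d C ν βh γh δ : ℝ)
    (hd : 0 ≤ d) (hC : 0 ≤ C) (hν : 0 < ν) (hβ : 0 < βh) (hγ : 0 < γh) (hδ : 0 < δ)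
    -- near-optimality packing hypothesis: any family of centers in `X_ε` whose
    -- `ℓ`-balls of radius `(ν^γ̂/2)·ε` are pairwise disjoint has at most `C·ε^{−d}` elements
    (hpack : ∀ ε > (0:ℝ), ∀ S : Finset E,
      (∀ x ∈ S, g x ≥ gstar - ε) →
      ((S : Set E).Pairwise fun x y =>
        Disjoint (lball βh γh x ((ν ^ γh / 2) * ε)) (lball βh γh y ((ν ^ γh / 2) * ε))) →
      (S.card : ℝ) ≤ C * ε ^ (-d))
    -- the depth-h cells: centers and cell regions
    (centers : Finset E) (cell : E → Set E)
    -- each cell contains the ℓ-ball of radius `β̂(νδ)^γ̂` around its center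
    (hball : ∀ c ∈ centers, lball βh γh c (βh * (ν * δ) ^ γh) ⊆ cell c)
    -- distinct cells at the same depth are disjoint
    (hdisj : (centers : Set E).Pairwise fun c c' => Disjoint (cell c) (cell c'))
    -- the centers all belong to `J_h`
    (hJ : ∀ c ∈ centers, g c + 2 * βh * δ ^ γh ≥ gstar) :
    (centers.card : ℝ) ≤ C * (2 * βh * δ ^ γh) ^ (-d) := by
  set ε := 2 * βh * δ ^ γh with hε
  have hεpos : 0 < ε := by positivity
  have hrad : (ν ^ γh / 2) * ε = βh * (ν * δ) ^ γh := by
    rw [Real.mul_rpow hν.le hδ.le]; ring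
  refine hpack ε hεpos centers (fun x hx => by linarith [hJ x hx]) ?_
  intro x hx y hy hxy
  rw [hrad]
  exact (hdisj hx hy hxy).mono (hball x hx) (hball y hy)
end

section
/- Let Y₁ ≤ … ≤ Yₙ ∈ [a,b] with Y₀ = a and Yₙ₊₁ = b, τ ∈ [0,1), and ε ≥ 0. Then the 'lower CDF shift' functional L = (1/(1−τ))·∑_{i=1}^{n}(Y_{i+1}−Y_i)·(i/n − ε − τ)⁺ − Y_{n+1} and the 'upper CDF shift' functional U = (1/(1−τ))·∑_{i=0}^{n−1}(Y_{i+1}−Y_i)·(min{1, i/n + ε} − τ)⁺ − Yₙ satisfy L ≤ U. -/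
open Finset

/-
The lower functional weights the spacing `y (i + 1) - y i` by `(i/n - ε - τ)⁺`, the upper one
by `(min 1 (i/n + ε) - τ)⁺`, which is termwise larger because `i/n ≤ 1` and `ε ≥ 0`. The sums
are indexed differently: the lower sum has the extra top term `i = n`, the upper one the extra
nonnegative term `i = 0`. The top term has weight at most `1 - τ`, so after the factor
`1/(1 - τ)` it contributes at most `y (n + 1) - y n`, exactly the difference of the two
subtracted endpoints.
-/

lemma max_sub_sub_le_max_min_add_sub {x ε τ : ℝ} (hx : x ≤ 1) (hε : 0 ≤ ε) :
    max (x - ε - τ) 0 ≤ max (min 1 (x + ε) - τ) 0 := by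
  gcongr
  exact le_min (by linarith) (by linarith)

lemma max_sub_sub_le_one_sub {x ε τ : ℝ} (hx : x ≤ 1) (hε : 0 ≤ ε) (hτ : τ ≤ 1) :
    max (x - ε - τ) 0 ≤ 1 - τ :=
  max_le (by linarith) (by linarith)

lemma natCast_div_le_one {i n : ℕ} (hi : i ≤ n) : (i : ℝ) / n ≤ 1 :=
  div_le_one_of_le₀ (by exact_mod_cast hi) n.cast_nonneg

theorem stmt19_general (n : ℕ) (y : ℕ → ℝ)
    (hmono : ∀ i ≤ n, y i ≤ y (i + 1))
    (τ ε : ℝ) (hτ : τ ∈ Set.Ico (0:ℝ) 1) (hε : 0 ≤ ε) :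
    (1 / (1 - τ)) * ∑ i ∈ Finset.Icc 1 n,
        (y (i + 1) - y i) * max ((i : ℝ) / n - ε - τ) 0 - y (n + 1) ≤
      (1 / (1 - τ)) * ∑ i ∈ Finset.range n,
        (y (i + 1) - y i) * max (min 1 ((i : ℝ) / n + ε) - τ) 0 - y n := by
  set f : ℕ → ℝ := fun i => (y (i + 1) - y i) * max ((i : ℝ) / n - ε - τ) 0
  set g : ℕ → ℝ := fun i => (y (i + 1) - y i) * max (min 1 ((i : ℝ) / n + ε) - τ) 0
  have hspacing : ∀ i ≤ n, 0 ≤ y (i + 1) - y i := fun i hi => sub_nonneg.2 (hmono i hi)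
  have h1τ : 0 < 1 - τ := sub_pos.2 hτ.2
  have hf_sum : ∑ i ∈ Icc 1 n, f i ≤ ∑ i ∈ range n, f i + f n := by
    rw [← sum_range_succ]
    refine sum_le_sum_of_subset_of_nonneg (fun i hi => ?_) fun i hi _ => ?_
    · simp only [mem_Icc, mem_range] at hi ⊢
      omega
    · exact mul_nonneg (hspacing i (by simpa [Nat.lt_succ_iff] using hi)) (le_max_right _ _)
  have hfg : ∑ i ∈ range n, f i ≤ ∑ i ∈ range n, g i := by
    refine sum_le_sum fun i hi => ?_
    have hin : i ≤ n := (mem_range.1 hi).le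
    exact mul_le_mul_of_nonneg_left
      (max_sub_sub_le_max_min_add_sub (natCast_div_le_one hin) hε) (hspacing i hin)
  have htop : f n ≤ (y (n + 1) - y n) * (1 - τ) :=
    mul_le_mul_of_nonneg_left
      (max_sub_sub_le_one_sub (natCast_div_le_one le_rfl) hε hτ.2.le) (hspacing n le_rfl)
  have htop' : 1 / (1 - τ) * f n ≤ y (n + 1) - y n := by
    rw [div_mul_eq_mul_div, one_mul, div_le_iff₀ h1τ]
    exact htop
  have hc : 0 ≤ 1 / (1 - τ) := by positivity
  calc 1 / (1 - τ) * ∑ i ∈ Icc 1 n, f i - y (n + 1)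
      ≤ 1 / (1 - τ) * ∑ i ∈ range n, g i + 1 / (1 - τ) * f n - y (n + 1) := by
        rw [← mul_add]
        gcongr
        linarith
    _ ≤ 1 / (1 - τ) * ∑ i ∈ range n, g i - y n := by linarith

/-- deterministic monotonicity of the Thomas–Learned-Miller CVaR bounds:
for a sorted sample `a = y₀ ≤ y₁ ≤ … ≤ yₙ ≤ yₙ₊₁ = b`, `τ ∈ [0,1)` and `ε ≥ 0`,
the lower-shift functional `L` is at most the upper-shift functional `U`. -/
theorem stmt19 (n : ℕ) (hn : 1 ≤ n) (a b : ℝ) (y : ℕ → ℝ)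
    (hy0 : y 0 = a) (hyn : y (n + 1) = b)
    (hmono : ∀ i ≤ n, y i ≤ y (i + 1))
    (τ ε : ℝ) (hτ : τ ∈ Set.Ico (0:ℝ) 1) (hε : 0 ≤ ε) :
    (1 / (1 - τ)) * ∑ i ∈ Finset.Icc 1 n,
        (y (i + 1) - y i) * max ((i : ℝ) / n - ε - τ) 0 - y (n + 1) ≤
      (1 / (1 - τ)) * ∑ i ∈ Finset.range n,
        (y (i + 1) - y i) * max (min 1 ((i : ℝ) / n + ε) - τ) 0 - y n :=
  stmt19_general n y hmono τ ε hτ hε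
end
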